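/- Let S = {s_1, …, s_n} with 0 < s_1 < s_2 < … < s_n real numbers, n ≥ 1, and M = 1 + s_n. Let A be the two-clock timed automaton with additive constraints over Σ = {♦, ♠} described in the context, and let u = 2(M − s_n) ♦ 2(s_n − s_{n−1}) ♦ … ♦ 2(s_2 − s_1) ♦ 2s_1 be the timed word consisting of these n + 1 time spans interleaved with n occurrences of ♦. Then the set of clock valuations ν such that some run of A on the timed word u ♠ starts in the configuration (p_1, (x = 0, y = 0)) and ends in a configuration (q_1, ν) is exactly {(x = 2a, y = 0) : a ∈ S}. -/

import Mathlib

/-- Clock conditions with additive constraints: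
`γ ::= true | x < c | x > c | x = c | (Σ_{x∈Z} x) ∼ c | γ ∧ γ | γ ∨ γ`. -/
inductive ACond (X : Type) where
  | tt : ACond X
  | lt : X → ℝ → ACond X
  | gt : X → ℝ → ACond X
  | eq : X → ℝ → ACond X
  | sumLt : Finset X → ℝ → ACond X
  | sumGt : Finset X → ℝ → ACond X
  | sumEq : Finset X → ℝ → ACond X
  | conj : ACond X → ACond X → ACond X
  | disj : ACond X → ACond X → ACond X

/-- Satisfaction of an additive clock condition by a clock valuation. -/
def ACond.sat {X : Type} (ν : X → ℝ) : ACond X → Prop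
  | .tt => True
  | .lt x c => ν x < c
  | .gt x c => ν x > c
  | .eq x c => ν x = c
  | .sumLt Z c => ∑ x ∈ Z, ν x < c
  | .sumGt Z c => ∑ x ∈ Z, ν x > c
  | .sumEq Z c => ∑ x ∈ Z, ν x = c
  | .conj γ₁ γ₂ => γ₁.sat ν ∧ γ₂.sat ν
  | .disj γ₁ γ₂ => γ₁.sat ν ∨ γ₂.sat ν

/-- A timed automaton with additive constraints. -/
structure ATA (A Q X : Type) where
  I : Set Q
  E : Set (Q × A × ACond X × Q × Set X)
  F : Set Q

/-- One step of a timed automaton with additive constraints on a stream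
element. -/
def ATA.Step {A Q X : Type} (M : ATA A Q X) (e : A ⊕ ℝ)
    (c c' : Q × (X → ℝ)) : Prop :=
  match e with
  | .inr r => c'.1 = c.1 ∧ ∀ x, c'.2 x = c.2 x + r
  | .inl a => ∃ γ Z, (c.1, a, γ, c'.1, Z) ∈ M.E ∧ γ.sat c.2 ∧
      (∀ x ∈ Z, c'.2 x = 0) ∧ (∀ x ∉ Z, c'.2 x = c.2 x)

/-- A run of a timed automaton with additive constraints on a timed word. -/
inductive ATA.RunFrom {A Q X : Type} (M : ATA A Q X) :
    List (A ⊕ ℝ) → (Q × (X → ℝ)) → (Q × (X → ℝ)) → Prop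
  | nil (c) : M.RunFrom [] c c
  | cons {e w c c' c''} : M.Step e c c' → M.RunFrom w c' c'' →
      M.RunFrom (e :: w) c c''

/-- Acceptance of a timed word. -/
def ATA.Accepts {A Q X : Type} (M : ATA A Q X) (w : List (A ⊕ ℝ)) : Prop :=
  ∃ q₀ ∈ M.I, ∃ c' : Q × (X → ℝ), M.RunFrom w (q₀, fun _ => 0) c' ∧ c'.1 ∈ M.F

/-- The two-letter alphabet `{♦, ♠}`. -/
inductive Sig where
  | dia : Sig
  | spade : Sig

/-- The states of the 3SUM automaton. -/
inductive St where
  | p1 : St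
  | p2 : St
  | q1 : St
  | q2 : St
  | r1 : St
  | r2 : St

/-- The transitions of the 3SUM automaton, over clocks `Bool` with
`x = false` and `y = true`. -/
def threeSumE (M : ℝ) : Set (St × Sig × ACond Bool × St × Set Bool) :=
  {(St.p1, Sig.dia, ACond.tt, St.p1, (∅ : Set Bool)),
   (St.p1, Sig.dia, ACond.tt, St.p2, ({false} : Set Bool)),
   (St.p2, Sig.dia, ACond.tt, St.p2, (∅ : Set Bool)),
   (St.p2, Sig.spade, ACond.tt, St.q1, ({true} : Set Bool)),
   (St.q1, Sig.dia, ACond.tt, St.q1, (∅ : Set Bool)),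
   (St.q1, Sig.dia, ACond.tt, St.q2, ({true} : Set Bool)),
   (St.q2, Sig.dia, ACond.tt, St.q2, (∅ : Set Bool)),
   (St.q2, Sig.spade, ACond.tt, St.r1, (∅ : Set Bool)),
   (St.r1, Sig.dia, ACond.tt, St.r1, (∅ : Set Bool)),
   (St.r1, Sig.dia, ACond.sumEq Finset.univ (4 * M), St.r2, (∅ : Set Bool)),
   (St.r2, Sig.dia, ACond.tt, St.r2, (∅ : Set Bool))}

/-- The 3SUM automaton with parameter `M`: initial state `p₁`, final state
`r₂`. -/
def threeSumAut (M : ℝ) : ATA Sig St Bool :=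
  ⟨{St.p1}, threeSumE M, {St.r2}⟩

/-- The timed word `2(prev − s_n) ♦ 2(s_n − s_{n−1}) ♦ … ♦ 2(s_2 − s_1) ♦ 2s_1`
built from the descending list `[s_n, …, s_1]` and the starting value
`prev`. -/
def uFrom (prev : ℝ) : List ℝ → List (Sig ⊕ ℝ)
  | [] => [Sum.inr (2 * prev)]
  | s :: rest => Sum.inr (2 * (prev - s)) :: Sum.inl Sig.dia :: uFrom s rest

/-- The timed word `(prev − s_n) ♦ (s_n − s_{n−1}) ♦ … ♦ (s_2 − s_1) ♦` built
from the descending list `[s_n, …, s_1]` and the starting value `prev`. -/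
def vFrom (prev : ℝ) : List ℝ → List (Sig ⊕ ℝ)
  | [] => []
  | s :: rest => Sum.inr (prev - s) :: Sum.inl Sig.dia :: vFrom s rest

/-! A run of the automaton on `u ♠` that ends in `q₁` stays in `p₁` for a while, moves to `p₂` at
one of the `♦`s (resetting `x`), and must then read `♠` from `p₂` (resetting `y`). If the move
happens right after the delay `2(s_{i+1} - s_i)`, the delays still to come telescope to `2 s_i`,
which is therefore the final value of `x`; every `i` can be chosen. -/

namespace ATA

variable {A Q X : Type} (M : ATA A Q X)

@[simp]
theorem runFrom_nil_iff {c c' : Q × (X → ℝ)} : M.RunFrom [] c c' ↔ c' = c := by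
  constructor
  · rintro ⟨⟩; rfl
  · rintro rfl; exact .nil _

@[simp]
theorem runFrom_cons_iff {e : A ⊕ ℝ} {w : List (A ⊕ ℝ)} {c c'' : Q × (X → ℝ)} :
    M.RunFrom (e :: w) c c'' ↔ ∃ c', M.Step e c c' ∧ M.RunFrom w c' c'' := by
  constructor
  · rintro (_ | ⟨hstep, hrun⟩); exact ⟨_, hstep, hrun⟩
  · rintro ⟨c', hstep, hrun⟩; exact .cons hstep hrun

@[simp]
theorem step_delay_iff {r : ℝ} {q q' : Q} {ν ν' : X → ℝ} :
    M.Step (.inr r) (q, ν) (q', ν') ↔ q' = q ∧ ν' = fun x => ν x + r := by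
  simp [Step, funext_iff]

end ATA

namespace threeSumAut

variable (M : ℝ)

open St Sig

theorem step_p1_dia_iff {ν ν' : Bool → ℝ} {q : St} :
    (threeSumAut M).Step (.inl dia) (p1, ν) (q, ν') ↔
      (q = p1 ∧ ν' = ν) ∨ (q = p2 ∧ ν' = Function.update ν false 0) := by
  simp [ATA.Step, threeSumAut, threeSumE, ACond.sat, funext_iff, Bool.forall_bool, or_and_right,
    exists_or]

theorem step_p2_dia_iff {ν ν' : Bool → ℝ} {q : St} :
    (threeSumAut M).Step (.inl dia) (p2, ν) (q, ν') ↔ q = p2 ∧ ν' = ν := by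
  simp [ATA.Step, threeSumAut, threeSumE, ACond.sat, funext_iff, Bool.forall_bool]

theorem step_p2_spade_iff {ν ν' : Bool → ℝ} {q : St} :
    (threeSumAut M).Step (.inl spade) (p2, ν) (q, ν') ↔
      q = q1 ∧ ν' = Function.update ν true 0 := by
  simp [ATA.Step, threeSumAut, threeSumE, ACond.sat, funext_iff, Bool.forall_bool, and_comm]

theorem not_step_p1_spade {ν : Bool → ℝ} {c : St × (Bool → ℝ)} :
    ¬ (threeSumAut M).Step (.inl spade) (p1, ν) c := by
  simp [ATA.Step, threeSumAut, threeSumE]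

theorem runFrom_p2_iff (l : List ℝ) (prev : ℝ) (ν₀ ν : Bool → ℝ) :
    (threeSumAut M).RunFrom (uFrom prev l ++ [.inl spade]) (p2, ν₀) (q1, ν) ↔
      ν false = ν₀ false + 2 * prev ∧ ν true = 0 := by
  induction l generalizing prev ν₀ with
  | nil =>
    simp only [uFrom, List.cons_append, List.nil_append, ATA.runFrom_cons_iff, Prod.exists,
      ATA.step_delay_iff, ATA.runFrom_nil_iff, Prod.mk.injEq]
    simp [step_p2_spade_iff, funext_iff, Bool.forall_bool]
  | cons s l ih =>
    have hdelay : 2 * (prev - s) + 2 * s = 2 * prev := by ring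
    simp [uFrom, step_p2_dia_iff, ih, add_assoc, hdelay]

theorem runFrom_p1_iff (l : List ℝ) (prev : ℝ) (ν₀ ν : Bool → ℝ) :
    (threeSumAut M).RunFrom (uFrom prev l ++ [.inl spade]) (p1, ν₀) (q1, ν) ↔
      ∃ a ∈ l, ν false = 2 * a ∧ ν true = 0 := by
  induction l generalizing prev ν₀ with
  | nil => simp [uFrom, not_step_p1_spade]
  | cons s l ih =>
    simp [uFrom, step_p1_dia_iff, ih, runFrom_p2_iff, or_and_right, exists_or]
    exact or_comm

end threeSumAut

theorem stmt14_general (l : List ℝ) (hne : l ≠ []) :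
    {ν : Bool → ℝ |
        (threeSumAut (1 + l.getLast hne)).RunFrom
          (uFrom (1 + l.getLast hne) l.reverse ++ [Sum.inl Sig.spade])
          (St.p1, fun _ => 0) (St.q1, ν)} =
      {ν : Bool → ℝ | ∃ a ∈ l, ν false = 2 * a ∧ ν true = 0} := by
  ext ν
  simp [threeSumAut.runFrom_p1_iff]

/-- For `S = {s_1 < … < s_n}` (positive reals, given as the sorted list `l`),
`M = 1 + s_n`, and `u = 2(M − s_n) ♦ … ♦ 2(s_2 − s_1) ♦ 2s_1`, the clock
valuations reachable from `(p₁, (0, 0))` at state `q₁` by a run of the 3SUM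
automaton on `u ♠` are exactly `{(x = 2a, y = 0) : a ∈ S}`. -/
theorem stmt14 (l : List ℝ) (hne : l ≠ []) (hsort : l.Pairwise (· < ·))
    (hpos : ∀ x ∈ l, 0 < x) :
    {ν : Bool → ℝ |
        (threeSumAut (1 + l.getLast hne)).RunFrom
          (uFrom (1 + l.getLast hne) l.reverse ++ [Sum.inl Sig.spade])
          (St.p1, fun _ => 0) (St.q1, ν)} =
      {ν : Bool → ℝ | ∃ a ∈ l, ν false = 2 * a ∧ ν true = 0} :=
  stmt14_general l hne
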